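/- arXiv:2005.13771 — 5 statements merged into one kernel-verified Lean document; each statement's English description precedes it below -/
import Mathlib

section
/- (Weak duality for the soft-margin SVM.) For every w ∈ ℝ^n, every b ∈ ℝ, and every α ∈ ℝ^m with ⟨α, y⟩ = 0, one has (1/2)‖w‖² + Σ_{i=1}^m ℓ_{cC}(1 − y_i(⟨w, x_i⟩ + b)) ≥ −D(α). -/
noncomputable section

open Finset Matrix

/-- Euclidean (ℓ₂) norm of a vector in ℝ^m. -/
def euclNorm {m : ℕ} (v : Fin m → ℝ) : ℝ := Real.sqrt (∑ i, (v i) ^ 2)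

/-- The zero "norm": number of nonzero entries. -/
def zeroNorm {m : ℕ} (α : Fin m → ℝ) : ℕ := {i | α i ≠ 0}.ncard

/-- The soft-margin loss ℓ_{cC}. -/
def softLoss (c C t : ℝ) : ℝ := if 0 ≤ t then C * t ^ 2 / 2 else c * t ^ 2 / 2

/-- The dual penalty h_{cC}. -/
def hLoss (c C t : ℝ) : ℝ := if 0 ≤ t then t ^ 2 / (2 * C) else t ^ 2 / (2 * c)

/-- The matrix Q whose j-th column is y_j · x_j. -/
def Qmat {m n : ℕ} (x : Fin m → Fin n → ℝ) (y : Fin m → ℝ) : Matrix (Fin n) (Fin m) ℝ :=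
  Matrix.of fun i j => y j * x j i

/-- The diagonal matrix E(α). -/
def Emat {m : ℕ} (c C : ℝ) (α : Fin m → ℝ) : Matrix (Fin m) (Fin m) ℝ :=
  Matrix.diagonal fun i => if 0 ≤ α i then 1 / C else 1 / c

/-- The Hessian H(α) = QᵀQ + E(α). -/
def Hmat {m n : ℕ} (c C : ℝ) (x : Fin m → Fin n → ℝ) (y : Fin m → ℝ) (α : Fin m → ℝ) :
    Matrix (Fin m) (Fin m) ℝ :=
  (Qmat x y)ᵀ * Qmat x y + Emat c C α

/-- The dual objective D(α) = (1/2)‖Qα‖² + (1/2)⟨E(α)α, α⟩ − ⟨1, α⟩. -/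
def Dfun {m n : ℕ} (c C : ℝ) (x : Fin m → Fin n → ℝ) (y : Fin m → ℝ) (α : Fin m → ℝ) : ℝ :=
  (1 / 2) * ∑ i, ((Qmat x y).mulVec α i) ^ 2
    + (1 / 2) * ∑ i, ((Emat c C α).mulVec α i) * α i
    - ∑ i, α i

/-- g(α, b) = H(α)α − 1 + b·y. -/
def gfun {m n : ℕ} (c C : ℝ) (x : Fin m → Fin n → ℝ) (y : Fin m → ℝ)
    (α : Fin m → ℝ) (b : ℝ) : Fin m → ℝ :=
  (Hmat c C x y α).mulVec α - (fun _ => (1 : ℝ)) + b • y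

/-- The hard-thresholding operator ℙ_s(α): minimizers of ‖u − α‖ over ‖u‖₀ ≤ s. -/
def hardThr {m : ℕ} (s : ℕ) (α : Fin m → ℝ) : Set (Fin m → ℝ) :=
  {u | zeroNorm u ≤ s ∧ ∀ v : Fin m → ℝ, zeroNorm v ≤ s → euclNorm (u - α) ≤ euclNorm (v - α)}

/-- Feasibility for the sparsity constrained problem (SSVM). -/
def feasible {m : ℕ} (y : Fin m → ℝ) (s : ℕ) (α : Fin m → ℝ) : Prop :=
  ∑ i, α i * y i = 0 ∧ zeroNorm α ≤ s

/-- (α, b) is an η-stationary point of (SSVM). -/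
def etaStat {m n : ℕ} (c C : ℝ) (x : Fin m → Fin n → ℝ) (y : Fin m → ℝ) (s : ℕ) (η : ℝ)
    (α : Fin m → ℝ) (b : ℝ) : Prop :=
  α ∈ hardThr s (α - η • gfun c C x y α b) ∧ ∑ i, α i * y i = 0

/-- The family T_s(α) of index sets of s largest entries in magnitude. -/
def Tsets {m : ℕ} (s : ℕ) (α : Fin m → ℝ) : Set (Finset (Fin m)) :=
  {T | T.card = s ∧ ∀ i ∈ T, ∀ j ∉ T, |α j| ≤ |α i|}

/-- The s-th largest entry of (|α₁|, …, |α_m|). -/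
def sthLargest {m : ℕ} (s : ℕ) (α : Fin m → ℝ) : ℝ :=
  sSup {t : ℝ | s ≤ {i | t ≤ |α i|}.ncard}

/-- Euclidean distance between pairs (α, b) and (α', b') in ℝ^m × ℝ. -/
def pairDist {m : ℕ} (α : Fin m → ℝ) (b : ℝ) (α' : Fin m → ℝ) (b' : ℝ) : ℝ :=
  Real.sqrt ((∑ i, (α i - α' i) ^ 2) + (b - b') ^ 2)

/-- Spectral (operator) norm of a matrix w.r.t. Euclidean norms. -/
def specNorm {m n : ℕ} (Q : Matrix (Fin n) (Fin m) ℝ) : ℝ :=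
  ‖LinearMap.toContinuousLinearMap (Matrix.toEuclideanLin Q)‖

/-!
Fenchel–Young duality: `hLoss c C` is the convex conjugate of `softLoss c C`, so
`αᵢ tᵢ ≤ ℓ(tᵢ) + h(αᵢ)` for the margins `tᵢ = 1 - yᵢ(⟨w, xᵢ⟩ + b)`, and `⟨w, Qα⟩ ≤ ½‖w‖² + ½‖Qα‖²`.
Summing, the constraint `⟨α, y⟩ = 0` kills the bias `b`, and what remains is `-D(α)`.
-/

lemma mul_le_sq_div_add_sq_div {k : ℝ} (hk : 0 < k) (a t : ℝ) :
    a * t ≤ k * t ^ 2 / 2 + a ^ 2 / (2 * k) := by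
  have hsq : k * t ^ 2 / 2 + a ^ 2 / (2 * k) - a * t = (k * t - a) ^ 2 / (2 * k) := by
    field_simp; ring
  have : 0 ≤ (k * t - a) ^ 2 / (2 * k) := by positivity
  linarith

lemma mul_le_softLoss_add_hLoss {c C : ℝ} (hc : 0 < c) (hC : 0 < C) (a t : ℝ) :
    a * t ≤ softLoss c C t + hLoss c C a := by
  unfold softLoss hLoss
  split_ifs with ht ha ha
  · exact mul_le_sq_div_add_sq_div hC a t
  · have hat : a * t ≤ 0 := mul_nonpos_of_nonpos_of_nonneg (not_le.mp ha).le ht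
    have : 0 ≤ C * t ^ 2 / 2 + a ^ 2 / (2 * c) := by positivity
    linarith
  · have hat : a * t ≤ 0 := mul_nonpos_of_nonneg_of_nonpos ha (not_le.mp ht).le
    have : 0 ≤ c * t ^ 2 / 2 + a ^ 2 / (2 * C) := by positivity
    linarith
  · exact mul_le_sq_div_add_sq_div hc a t

lemma half_sum_Emat_mulVec_mul_eq_sum_hLoss {m : ℕ} (c C : ℝ) (α : Fin m → ℝ) :
    (1 / 2) * ∑ i, (Emat c C α).mulVec α i * α i = ∑ i, hLoss c C (α i) := by
  rw [Finset.mul_sum]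
  refine Finset.sum_congr rfl fun i _ => ?_
  simp only [Emat, Matrix.mulVec_diagonal, hLoss]
  split_ifs <;> ring

lemma Dfun_eq_sum_hLoss {m n : ℕ} (c C : ℝ) (x : Fin m → Fin n → ℝ) (y α : Fin m → ℝ) :
    Dfun c C x y α
      = (1 / 2) * ∑ j, ((Qmat x y).mulVec α j) ^ 2 + ∑ i, hLoss c C (α i) - ∑ i, α i := by
  rw [Dfun, half_sum_Emat_mulVec_mul_eq_sum_hLoss]

lemma dotProduct_Qmat_mulVec {m n : ℕ} (x : Fin m → Fin n → ℝ) (y α : Fin m → ℝ)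
    (w : Fin n → ℝ) :
    ∑ j, w j * (Qmat x y).mulVec α j = ∑ i, α i * y i * ∑ j, w j * x i j := by
  simp only [Qmat, Matrix.mulVec, dotProduct, Matrix.of_apply, Finset.mul_sum]
  rw [Finset.sum_comm]
  exact Finset.sum_congr rfl fun i _ => Finset.sum_congr rfl fun j _ => by ring

lemma sum_mul_margin_eq {m n : ℕ} (x : Fin m → Fin n → ℝ) (y α : Fin m → ℝ)
    (hα : ∑ i, α i * y i = 0) (w : Fin n → ℝ) (b : ℝ) :
    ∑ i, α i * (1 - y i * ((∑ j, w j * x i j) + b))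
      = ∑ i, α i - ∑ j, w j * (Qmat x y).mulVec α j := by
  have hsplit : ∀ i, α i * (1 - y i * ((∑ j, w j * x i j) + b))
      = α i - α i * y i * (∑ j, w j * x i j) - α i * y i * b := fun i => by ring
  rw [Finset.sum_congr rfl fun i _ => hsplit i, Finset.sum_sub_distrib, Finset.sum_sub_distrib,
    ← Finset.sum_mul, hα, dotProduct_Qmat_mulVec, zero_mul, sub_zero]

lemma sum_mul_le_half_sum_sq_add {n : ℕ} (u v : Fin n → ℝ) :
    ∑ j, u j * v j ≤ (1 / 2) * ∑ j, (u j) ^ 2 + (1 / 2) * ∑ j, (v j) ^ 2 := by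
  rw [Finset.mul_sum, Finset.mul_sum, ← Finset.sum_add_distrib]
  exact Finset.sum_le_sum fun j _ => by nlinarith [sq_nonneg (u j - v j)]

theorem stmt_1_general {m n : ℕ} (c C : ℝ) (hc : 0 < c) (hcC : c < C)
    (x : Fin m → Fin n → ℝ) (y : Fin m → ℝ)
    (w : Fin n → ℝ) (b : ℝ) (α : Fin m → ℝ) (hα : ∑ i, α i * y i = 0) :
    (1 / 2) * ∑ j, (w j) ^ 2
        + ∑ i, softLoss c C (1 - y i * ((∑ j, w j * x i j) + b))
      ≥ - Dfun c C x y α := by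
  set t : Fin m → ℝ := fun i => 1 - y i * ((∑ j, w j * x i j) + b)
  have hFenchel : ∑ i, α i * t i ≤ ∑ i, softLoss c C (t i) + ∑ i, hLoss c C (α i) := by
    rw [← Finset.sum_add_distrib]
    exact Finset.sum_le_sum fun i _ => mul_le_softLoss_add_hLoss hc (hc.trans hcC) _ _
  have hmargin := sum_mul_margin_eq x y α hα w b
  have hYoung := sum_mul_le_half_sum_sq_add w ((Qmat x y).mulVec α)
  rw [Dfun_eq_sum_hLoss]
  linarith

/-- weak duality for the soft-margin SVM. -/
theorem stmt_1 {m n : ℕ} (hm : 1 ≤ m) (hn : 1 ≤ n) (c C : ℝ) (hc : 0 < c) (hcC : c < C)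
    (x : Fin m → Fin n → ℝ) (y : Fin m → ℝ) (hy : ∀ i, y i = 1 ∨ y i = -1)
    (w : Fin n → ℝ) (b : ℝ) (α : Fin m → ℝ) (hα : ∑ i, α i * y i = 0) :
    (1 / 2) * ∑ j, (w j) ^ 2
        + ∑ i, softLoss c C (1 - y i * ((∑ j, w j * x i j) + b))
      ≥ - Dfun c C x y α :=
  stmt_1_general c C hc hcC x y w b α hα
end
end

section
/- (Strong convexity inequality for D.) For all α, α′ ∈ ℝ^m, D(α) − D(α′) ≥ ⟨H(α′)α′ − 1, α − α′⟩ + (1/2)⟨α − α′, P(α − α′)⟩, where P := QᵀQ + (1/C)·I and 1 is the all-ones vector. -/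
noncomputable section

open Finset Matrix

/-! D splits into the quadratic ½‖Qα‖², whose second-order expansion is exact, the linear term
−⟨1, α⟩, and the separable penalty ½⟨E(α)α, α⟩ = Σᵢ hᵢ(αᵢ), where each hᵢ is t²/(2C) for t ≥ 0 and
t²/(2c) for t < 0. Since 1/C ≤ 1/c, the curvature only jumps up when crossing 0 leftwards, so each
hᵢ lies above its tangent line plus (1/(2C))·(difference)², and summing gives the penalty part of P. -/

lemma piecewise_sq_strong_convex {l u : ℝ} (hlu : l ≤ u) (a b : ℝ) :
    (if 0 ≤ b then l else u) * b * (a - b) + l * (a - b) ^ 2 / 2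
      ≤ (if 0 ≤ a then l else u) * a * a / 2 - (if 0 ≤ b then l else u) * b * b / 2 := by
  have hgap : 0 ≤ u - l := sub_nonneg.2 hlu
  split_ifs with hb ha ha
  · nlinarith
  · nlinarith [mul_nonneg hgap (sq_nonneg a)]
  · have hb' : 0 ≤ -b := by linarith
    nlinarith [mul_nonneg hgap (mul_nonneg hb' (by linarith : 0 ≤ a - b / 2))]
  · nlinarith

lemma Matrix.dotProduct_transpose_mul_mulVec {m n R : Type*} [Fintype m] [Fintype n]
    [CommSemiring R] (A : Matrix n m R) (u w : m → R) :
    u ⬝ᵥ ((Aᵀ * A) *ᵥ w) = (A *ᵥ u) ⬝ᵥ (A *ᵥ w) := by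
  rw [← mulVec_mulVec, dotProduct_mulVec, vecMul_transpose]

lemma Matrix.mulVec_dotProduct_mulVec_sub {m n R : Type*} [Fintype m] [Fintype n]
    [CommRing R] (A : Matrix n m R) (u v : m → R) :
    (A *ᵥ u) ⬝ᵥ (A *ᵥ u) - (A *ᵥ v) ⬝ᵥ (A *ᵥ v)
      = 2 * ((u - v) ⬝ᵥ ((Aᵀ * A) *ᵥ v)) + (u - v) ⬝ᵥ ((Aᵀ * A) *ᵥ (u - v)) := by
  simp only [dotProduct_transpose_mul_mulVec, mulVec_sub, sub_dotProduct, dotProduct_sub,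
    dotProduct_comm (A *ᵥ v) (A *ᵥ u)]
  ring

lemma Emat_strong_convex {m : ℕ} {c C : ℝ} (hc : 0 < c) (hcC : c ≤ C) (α α' : Fin m → ℝ) :
    (α - α') ⬝ᵥ (Emat c C α' *ᵥ α') + 1 / C * ((α - α') ⬝ᵥ (α - α')) / 2
      ≤ (Emat c C α *ᵥ α) ⬝ᵥ α / 2 - (Emat c C α' *ᵥ α') ⬝ᵥ α' / 2 := by
  simp only [Emat, mulVec_diagonal, dotProduct, Finset.mul_sum, Finset.sum_div,
    ← Finset.sum_add_distrib, ← Finset.sum_sub_distrib, Pi.sub_apply]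
  refine Finset.sum_le_sum fun i _ => ?_
  have := piecewise_sq_strong_convex (one_div_le_one_div_of_le hc hcC) (α i) (α' i)
  linarith

lemma Dfun_eq_dotProduct {m n : ℕ} (c C : ℝ) (x : Fin m → Fin n → ℝ) (y α : Fin m → ℝ) :
    Dfun c C x y α = 1 / 2 * ((Qmat x y *ᵥ α) ⬝ᵥ (Qmat x y *ᵥ α))
      + 1 / 2 * ((Emat c C α *ᵥ α) ⬝ᵥ α) - ∑ i, α i := by
  simp only [Dfun, sq]
  rfl

theorem stmt_4_general {m n : ℕ} (c C : ℝ) (hc : 0 < c) (hcC : c < C)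
    (x : Fin m → Fin n → ℝ) (y : Fin m → ℝ)
    (α α' : Fin m → ℝ) :
    Dfun c C x y α - Dfun c C x y α' ≥
      (∑ i, ((Hmat c C x y α').mulVec α' i - 1) * (α i - α' i))
        + (1 / 2) * ∑ i, (α i - α' i) *
            (((Qmat x y)ᵀ * Qmat x y + (1 / C) • (1 : Matrix (Fin m) (Fin m) ℝ)).mulVec
              (α - α') i) := by
  set Q := Qmat x y
  have hgrad : ∑ i, ((Hmat c C x y α' *ᵥ α') i - 1) * (α i - α' i)
      = (α - α') ⬝ᵥ ((Qᵀ * Q) *ᵥ α') + (α - α') ⬝ᵥ (Emat c C α' *ᵥ α')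
        - (∑ i, α i - ∑ i, α' i) := by
    rw [← dotProduct_add, ← add_mulVec, ← Finset.sum_sub_distrib, dotProduct,
      ← Finset.sum_sub_distrib]
    exact Finset.sum_congr rfl fun i _ => by rw [Hmat, Pi.sub_apply]; ring
  have hhess : ∑ i, (α i - α' i)
        * ((Qᵀ * Q + (1 / C) • (1 : Matrix (Fin m) (Fin m) ℝ)) *ᵥ (α - α')) i
      = (α - α') ⬝ᵥ ((Qᵀ * Q) *ᵥ (α - α')) + 1 / C * ((α - α') ⬝ᵥ (α - α')) := by
    change (α - α') ⬝ᵥ _ = _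
    rw [add_mulVec, smul_mulVec, one_mulVec, dotProduct_add, dotProduct_smul, smul_eq_mul]
  rw [Dfun_eq_dotProduct, Dfun_eq_dotProduct, hgrad, hhess]
  linarith [Q.mulVec_dotProduct_mulVec_sub α α', Emat_strong_convex hc hcC.le α α']

/-- strong convexity inequality for D. -/
theorem stmt_4 {m n : ℕ} (hm : 1 ≤ m) (hn : 1 ≤ n) (c C : ℝ) (hc : 0 < c) (hcC : c < C)
    (x : Fin m → Fin n → ℝ) (y : Fin m → ℝ) (hy : ∀ i, y i = 1 ∨ y i = -1)
    (α α' : Fin m → ℝ) :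
    Dfun c C x y α - Dfun c C x y α' ≥
      (∑ i, ((Hmat c C x y α').mulVec α' i - 1) * (α i - α' i))
        + (1 / 2) * ∑ i, (α i - α' i) *
            (((Qmat x y)ᵀ * Qmat x y + (1 / C) • (1 : Matrix (Fin m) (Fin m) ℝ)).mulVec
              (α - α') i) :=
  stmt_4_general c C hc hcC x y α α'
end
end

section
/- (Theorem 4 b, case ‖α*‖₀ = s.) If α* is a local minimizer of (SSVM) with ‖α*‖₀ = s, then there exist b* ∈ ℝ and η̄ > 0 (depending on α*) such that for every η with 0 < η ≤ η̄, the pair (α*, b*) is an η-stationary point of (SSVM). -/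
noncomputable section

open Finset Matrix

/-!
Near `α*` the sign pattern on the support `T` of `α*` is frozen, so along directions supported
in `T` the objective `D` is an honest quadratic. Minimality along the directions
`y k • e j - y j • e k`, which keep `⟨α, y⟩ = 0`, forces `H(α*)α* - 1` to be a multiple `-b • y`
on `T`, i.e. `g(α*, b)` vanishes on `T`. Hence for small `η` the point `α* - η g(α*, b)` agrees
with `α*` on `T` and is, off `T`, smaller in modulus than every nonzero entry of `α*`: `T` indexes
`s` largest entries, and keeping them returns `α*`.
-/
open Filter Topology

theorem Finset.sum_le_sum_of_card_le_of_forall_le {ι M : Type*} [DecidableEq ι]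
    [AddCommMonoid M] [LinearOrder M] [IsOrderedAddMonoid M] {A B : Finset ι} {f : ι → M}
    (hf : ∀ i, 0 ≤ f i) (hcard : A.card ≤ B.card) (hle : ∀ i ∈ A \ B, ∀ j ∈ B \ A, f i ≤ f j) :
    ∑ i ∈ A, f i ≤ ∑ i ∈ B, f i := by
  rw [← sum_inter_add_sum_sdiff A B, ← sum_inter_add_sum_sdiff B A, inter_comm B A]
  gcongr _ + ?_
  have hcard' : (A \ B).card ≤ (B \ A).card := by
    have hA := card_sdiff_add_card_inter A B
    have hB := card_sdiff_add_card_inter B A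
    rw [inter_comm B A] at hB
    omega
  rcases (A \ B).eq_empty_or_nonempty with hA | hA
  · rw [hA, sum_empty]
    exact sum_nonneg fun i _ => hf i
  obtain ⟨a, ha⟩ := hA
  calc ∑ i ∈ A \ B, f i ≤ (A \ B).card • (A \ B).sup' ⟨a, ha⟩ f :=
        sum_le_card_nsmul _ _ _ fun i hi => le_sup' f hi
    _ ≤ (B \ A).card • (A \ B).sup' ⟨a, ha⟩ f :=
        nsmul_le_nsmul_left ((hf a).trans (le_sup' f ha)) hcard'
    _ ≤ ∑ j ∈ B \ A, f j :=
        card_nsmul_le_sum _ _ _ fun j hj => sup'_le _ f fun i hi => hle i hi j hj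

lemma zeroNorm_eq_card_filter {m : ℕ} (α : Fin m → ℝ) :
    zeroNorm α = (univ.filter fun i => α i ≠ 0).card := by
  classical
  rw [zeroNorm, Set.ncard_eq_toFinset_card', Set.toFinset_ofPred]

lemma mem_hardThr_of_mem_Tsets {m s : ℕ} {β u : Fin m → ℝ} {T : Finset (Fin m)}
    (hT : T ∈ Tsets s β) (hu : ∀ i ∈ T, u i = β i) (hu' : ∀ i ∉ T, u i = 0) :
    u ∈ hardThr s β := by
  classical
  obtain ⟨hTcard, hTle⟩ := hT
  refine ⟨?_, fun v hv => Real.sqrt_le_sqrt ?_⟩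
  · rw [zeroNorm_eq_card_filter, ← hTcard]
    exact card_le_card fun i hi => not_not.1 (mt (hu' i) (mem_filter.1 hi).2)
  set Z := univ.filter fun i => v i = 0
  have hu_sq : ∑ i, (u - β) i ^ 2 = ∑ i ∈ Tᶜ, β i ^ 2 := by
    rw [← sum_compl_add_sum T, sum_eq_zero (s := T) fun i hi => by simp [hu i hi], add_zero]
    exact sum_congr rfl fun i hi => by simp [hu' i (mem_compl.1 hi)]
  have hv_sq : ∑ i ∈ Z, β i ^ 2 ≤ ∑ i, (v - β) i ^ 2 :=
    calc ∑ i ∈ Z, β i ^ 2 = ∑ i ∈ Z, (v - β) i ^ 2 :=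
          sum_congr rfl fun i hi => by simp [(mem_filter.1 hi).2]
      _ ≤ ∑ i, (v - β) i ^ 2 :=
          sum_le_sum_of_subset_of_nonneg (subset_univ Z) fun i _ _ => sq_nonneg _
  have hcard : Tᶜ.card ≤ Z.card := by
    have hsplit : Z.card + (univ.filter fun i => ¬v i = 0).card = m := by
      rw [card_filter_add_card_filter_not, card_univ, Fintype.card_fin]
    rw [zeroNorm_eq_card_filter] at hv
    simp only [ne_eq] at hv
    rw [card_compl, hTcard, Fintype.card_fin]
    omega
  have hle : ∀ i ∈ Tᶜ \ Z, ∀ j ∈ Z \ Tᶜ, β i ^ 2 ≤ β j ^ 2 := fun i hi j hj =>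
    sq_le_sq.2 (hTle j (by simpa using (mem_sdiff.1 hj).2) i (mem_compl.1 (mem_sdiff.1 hi).1))
  rw [hu_sq]
  exact (sum_le_sum_of_card_le_of_forall_le (fun i => sq_nonneg (β i)) hcard hle).trans hv_sq

lemma eq_zero_of_eventually_nonneg_mul_add_sq_mul {A B : ℝ}
    (h : ∀ᶠ t in 𝓝 (0 : ℝ), 0 ≤ t * B + t ^ 2 * A) : B = 0 := by
  have hmin : IsLocalMin (fun t : ℝ => t * B + t ^ 2 * A) 0 := by
    filter_upwards [h] with t ht
    simpa using ht
  have hlin : HasDerivAt (fun t : ℝ => t * B) B 0 := hasDerivAt_mul_const B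
  have hsq : HasDerivAt (fun t : ℝ => t ^ 2 * A) 0 0 := by
    simpa using (hasDerivAt_pow 2 (0 : ℝ)).mul_const A
  exact hmin.hasDerivAt_eq_zero (by simpa using hlin.fun_add hsq)

lemma Dfun_add_smul {m n : ℕ} (c C : ℝ) (x : Fin m → Fin n → ℝ) (y : Fin m → ℝ)
    (α d : Fin m → ℝ) (t : ℝ) (hE : Emat c C (α + t • d) = Emat c C α) :
    Dfun c C x y (α + t • d) = Dfun c C x y α
      + t * ((Hmat c C x y α *ᵥ α - fun _ => 1) ⬝ᵥ d)
      + t ^ 2 / 2 * ((Qmat x y *ᵥ d) ⬝ᵥ (Qmat x y *ᵥ d) + (Emat c C α *ᵥ d) ⬝ᵥ d) := by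
  have hD : ∀ β, Dfun c C x y β = (1 / 2) * (Qmat x y *ᵥ β) ⬝ᵥ (Qmat x y *ᵥ β)
      + (1 / 2) * (Emat c C β *ᵥ β) ⬝ᵥ β - (fun _ => 1) ⬝ᵥ β := by
    intro β
    simp only [Dfun, dotProduct, sq, one_mul]
  have hQ : (Qmat x y *ᵥ α) ⬝ᵥ (Qmat x y *ᵥ d) = ((Qmat x y)ᵀ *ᵥ (Qmat x y *ᵥ α)) ⬝ᵥ d := by
    rw [dotProduct_mulVec, mulVec_transpose]
  have hEsymm : (Emat c C α *ᵥ d) ⬝ᵥ α = (Emat c C α *ᵥ α) ⬝ᵥ d := by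
    simp only [Emat, mulVec_diagonal, dotProduct]
    exact sum_congr rfl fun i _ => by ring
  rw [hD, hD, hE, Hmat, add_mulVec, ← mulVec_mulVec]
  simp only [mulVec_add, mulVec_smul, dotProduct_add, add_dotProduct, dotProduct_smul,
    smul_dotProduct, sub_dotProduct, smul_eq_mul,
    dotProduct_comm (Qmat x y *ᵥ d) (Qmat x y *ᵥ α), hQ, hEsymm]
  ring

lemma eventually_Emat_add_smul_eq {m : ℕ} (c C : ℝ) {α d : Fin m → ℝ}
    (hd : ∀ i, d i ≠ 0 → α i ≠ 0) :
    ∀ᶠ t in 𝓝 (0 : ℝ), Emat c C (α + t • d) = Emat c C α := by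
  have hsign : ∀ i, ∀ᶠ t in 𝓝 (0 : ℝ), (0 ≤ α i + t * d i ↔ 0 ≤ α i) := by
    intro i
    rcases eq_or_ne (d i) 0 with h0 | h0
    · simp [h0]
    have hcont : ContinuousAt (fun t : ℝ => α i + t * d i) 0 := by fun_prop
    rcases (hd i h0).lt_or_gt with hneg | hpos
    · filter_upwards [hcont.eventually_lt continuousAt_const (by simpa using hneg)] with t ht
      exact iff_of_false ht.not_ge hneg.not_ge
    · filter_upwards [continuousAt_const.eventually_lt hcont (by simpa using hpos)] with t ht
      exact iff_of_true ht.le hpos.le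
  filter_upwards [eventually_all.2 hsign] with t ht
  simp only [Emat, Pi.add_apply, Pi.smul_apply, smul_eq_mul, ht]

lemma feasible_add_smul {m s : ℕ} {y α d : Fin m → ℝ} (hα : feasible y s α)
    (hd : ∀ i, d i ≠ 0 → α i ≠ 0) (hdy : d ⬝ᵥ y = 0) (t : ℝ) :
    feasible y s (α + t • d) := by
  refine ⟨?_, le_trans ?_ hα.2⟩
  · change (α + t • d) ⬝ᵥ y = 0
    have hαy : α ⬝ᵥ y = 0 := hα.1
    rw [add_dotProduct, smul_dotProduct, hdy, hαy, smul_zero, add_zero]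
  · refine Set.ncard_le_ncard (fun i hi => ?_) (Set.toFinite _)
    by_contra hαi
    have hdi : d i = 0 := not_not.1 (mt (hd i) hαi)
    simp_all

section LocalMinimizer

variable {m n : ℕ} {c C : ℝ} {x : Fin m → Fin n → ℝ} {y : Fin m → ℝ} {s : ℕ} {α : Fin m → ℝ}

lemma grad_dotProduct_eq_zero_of_isLocalMin (hα : feasible y s α)
    (hloc : ∃ ε > (0 : ℝ), ∀ β : Fin m → ℝ, feasible y s β → euclNorm (β - α) < ε →
      Dfun c C x y α ≤ Dfun c C x y β)
    {d : Fin m → ℝ} (hd : ∀ i, d i ≠ 0 → α i ≠ 0) (hdy : d ⬝ᵥ y = 0) :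
    (Hmat c C x y α *ᵥ α - fun _ => 1) ⬝ᵥ d = 0 := by
  obtain ⟨ε, hε, hmin⟩ := hloc
  have hnear : ∀ᶠ t in 𝓝 (0 : ℝ), euclNorm ((α + t • d) - α) < ε := by
    have hcont : Continuous fun t : ℝ => euclNorm ((α + t • d) - α) := by
      unfold euclNorm; fun_prop
    exact hcont.continuousAt.eventually_lt continuousAt_const (by simpa [euclNorm] using hε)
  refine eq_zero_of_eventually_nonneg_mul_add_sq_mul
    (A := ((Qmat x y *ᵥ d) ⬝ᵥ (Qmat x y *ᵥ d) + (Emat c C α *ᵥ d) ⬝ᵥ d) / 2) ?_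
  filter_upwards [hnear, eventually_Emat_add_smul_eq c C hd] with t ht hE
  have := hmin _ (feasible_add_smul hα hd hdy t) ht
  rw [Dfun_add_smul c C x y α d t hE] at this
  linarith

lemma exists_gfun_eq_zero_of_isLocalMin (hy : ∀ i, y i = 1 ∨ y i = -1) (hα : feasible y s α)
    (hloc : ∃ ε > (0 : ℝ), ∀ β : Fin m → ℝ, feasible y s β → euclNorm (β - α) < ε →
      Dfun c C x y α ≤ Dfun c C x y β) :
    ∃ b : ℝ, ∀ i, α i ≠ 0 → gfun c C x y α b i = 0 := by
  set v := Hmat c C x y α *ᵥ α - fun _ => 1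
  have hcross : ∀ j k, α j ≠ 0 → α k ≠ 0 → v j * y k = v k * y j := by
    intro j k hj hk
    have hd : ∀ i, (Pi.single j (y k) - Pi.single k (y j) : Fin m → ℝ) i ≠ 0 → α i ≠ 0 := by
      intro i hi
      by_cases hij : i = j
      · exact hij ▸ hj
      by_cases hik : i = k
      · exact hik ▸ hk
      simp [hij, hik] at hi
    have := grad_dotProduct_eq_zero_of_isLocalMin hα hloc hd
      (by simp [sub_dotProduct, single_dotProduct, mul_comm])
    rw [dotProduct_sub, dotProduct_single, dotProduct_single] at this
    linarith
  by_cases hsupp : ∃ k, α k ≠ 0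
  · obtain ⟨k, hk⟩ := hsupp
    refine ⟨-(v k * y k), fun i hi => ?_⟩
    have hyk : y k * y k = 1 := by rcases hy k with h | h <;> simp [h]
    have hvi : v i = v k * y i * y k := by
      rw [← hcross i k hi hk, mul_assoc, hyk, mul_one]
    simp only [gfun, Pi.add_apply, Pi.smul_apply, smul_eq_mul]
    change v i + _ = 0
    rw [hvi]; ring
  · exact ⟨0, fun i hi => absurd ⟨i, hi⟩ hsupp⟩

end LocalMinimizer

theorem stmt_10_general {m n : ℕ} (c C : ℝ)
    (x : Fin m → Fin n → ℝ) (y : Fin m → ℝ) (hy : ∀ i, y i = 1 ∨ y i = -1)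
    (s : ℕ)
    (αstar : Fin m → ℝ) (hfeas : feasible y s αstar)
    (hloc : ∃ ε > (0 : ℝ), ∀ α : Fin m → ℝ, feasible y s α → euclNorm (α - αstar) < ε →
      Dfun c C x y αstar ≤ Dfun c C x y α)
    (hz : zeroNorm αstar = s) :
    ∃ bstar : ℝ, ∃ ηbar > (0 : ℝ), ∀ η : ℝ, 0 < η → η ≤ ηbar →
      etaStat c C x y s η αstar bstar := by
  classical
  obtain ⟨b, hb⟩ := exists_gfun_eq_zero_of_isLocalMin hy hfeas hloc
  set g := gfun c C x y αstar b
  have hsmall : ∀ᶠ η in 𝓝[>] (0 : ℝ), ∀ i j, αstar i ≠ 0 → η * |g j| < |αstar i| := by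
    refine eventually_all.2 fun i => eventually_all.2 fun j => ?_
    by_cases hi : αstar i = 0
    · exact Eventually.of_forall fun _ h => absurd hi h
    have hcont : ContinuousAt (fun η : ℝ => η * |g j|) 0 := by fun_prop
    exact (hcont.eventually_lt continuousAt_const (by simpa using hi)).filter_mono
      nhdsWithin_le_nhds |>.mono fun _ h _ => h
  obtain ⟨ηbar, hηbar, hsub⟩ := mem_nhdsGT_iff_exists_Ioc_subset.1 hsmall
  refine ⟨b, ηbar, hηbar, fun η hη hle => ⟨?_, hfeas.1⟩⟩
  change αstar ∈ hardThr s (αstar - η • g)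
  have hT : univ.filter (fun i => αstar i ≠ 0) ∈ Tsets s (αstar - η • g) := by
    refine ⟨by rw [← zeroNorm_eq_card_filter, hz], fun i hi j hj => ?_⟩
    have hi' := (mem_filter.1 hi).2
    have hj' : αstar j = 0 := by simpa using hj
    simpa [hb i hi', hj', abs_mul, abs_of_pos hη] using (hsub ⟨hη, hle⟩ i j hi').le
  exact mem_hardThr_of_mem_Tsets hT (fun i hi => by simp [hb i (mem_filter.1 hi).2])
    fun i hi => by simpa using hi

/-- a local minimizer with ‖α*‖₀ = s is an η-stationary point for all small η. -/
theorem stmt_10 {m n : ℕ} (hm : 1 ≤ m) (hn : 1 ≤ n) (c C : ℝ) (hc : 0 < c) (hcC : c < C)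
    (x : Fin m → Fin n → ℝ) (y : Fin m → ℝ) (hy : ∀ i, y i = 1 ∨ y i = -1)
    (s : ℕ) (hs1 : 1 ≤ s) (hs2 : s ≤ m)
    (αstar : Fin m → ℝ) (hfeas : feasible y s αstar)
    (hloc : ∃ ε > (0 : ℝ), ∀ α : Fin m → ℝ, feasible y s α → euclNorm (α - αstar) < ε →
      Dfun c C x y αstar ≤ Dfun c C x y α)
    (hz : zeroNorm αstar = s) :
    ∃ bstar : ℝ, ∃ ηbar > (0 : ℝ), ∀ η : ℝ, 0 < η → η ≤ ηbar →
      etaStat c C x y s η αstar bstar :=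
  stmt_10_general c C x y hy s αstar hfeas hloc hz
end
end

section
/- (Lemma 1 b.) If α* is a local minimizer of (SSVM) with ‖α*‖₀ < s, then α* is a global minimizer of (SSVM) and is the unique global minimizer: D(α*) ≤ D(α) for every feasible α, and any feasible α with D(α) = D(α*) equals α*. -/
noncomputable section

open Finset Matrix

/-!
Write `D(α) = ½‖Qα‖² + ∑ h(αᵢ) - ∑ αᵢ` with `h = hLoss c C` piecewise quadratic. Then
`D(α + d) - D(α) - ⟨∇D(α), d⟩` lies between `‖d‖²/(2C)` and `½‖Qd‖² + ‖d‖²/(2c)`.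
Because `‖α*‖₀ < s`, the whole line through `α*` in a direction `y_j eᵢ - yᵢ e_j` with
`α*_j ≠ 0` (any `j` if `α* = 0` and `s ≥ 2`) is feasible, and minimality of `α*` on these
lines forces `∇D(α*) ∈ ℝ y`. Hence `⟨∇D(α*), β - α*⟩ = 0` for feasible `β`, and the lower
bound gives `D(β) ≥ D(α*) + ‖β - α*‖²/(2C)`. When `α* = 0` and `s = 1`, the only feasible
point is `0`.
-/

open Filter Topology

def hLossDeriv (c C t : ℝ) : ℝ := if 0 ≤ t then t / C else t / c

lemma piecewise_sq_bregman_bounds {p q : ℝ} (hpq : p ≤ q) (a d : ℝ) :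
    p * d ^ 2 ≤ (if 0 ≤ a + d then p * (a + d) ^ 2 else q * (a + d) ^ 2)
        - (if 0 ≤ a then p * a ^ 2 else q * a ^ 2) - (if 0 ≤ a then 2 * p * a else 2 * q * a) * d ∧
      (if 0 ≤ a + d then p * (a + d) ^ 2 else q * (a + d) ^ 2)
        - (if 0 ≤ a then p * a ^ 2 else q * a ^ 2) - (if 0 ≤ a then 2 * p * a else 2 * q * a) * d
        ≤ q * d ^ 2 := by
  have hqp : 0 ≤ q - p := sub_nonneg.2 hpq
  split_ifs with hb ha ha
  · constructor <;> nlinarith [mul_nonneg hqp (sq_nonneg d)]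
  · have hab : 0 ≤ -a * (a + d) := mul_nonneg (neg_nonneg.2 (not_le.1 ha).le) hb
    constructor <;> nlinarith [mul_nonneg hqp (sq_nonneg (a + d)), mul_nonneg hqp hab]
  · have hab : 0 ≤ a * -(a + d) := mul_nonneg ha (neg_nonneg.2 (not_le.1 hb).le)
    constructor <;> nlinarith [mul_nonneg hqp (sq_nonneg (a + d)), mul_nonneg hqp hab]
  · constructor <;> nlinarith [mul_nonneg hqp (sq_nonneg d)]

lemma hLoss_bregman_bounds {c C : ℝ} (hc : 0 < c) (hcC : c ≤ C) (a d : ℝ) :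
    d ^ 2 / (2 * C) ≤ hLoss c C (a + d) - hLoss c C a - hLossDeriv c C a * d ∧
      hLoss c C (a + d) - hLoss c C a - hLossDeriv c C a * d ≤ d ^ 2 / (2 * c) := by
  have hpq : 1 / (2 * C) ≤ 1 / (2 * c) := by gcongr
  have hLoss_eq (t : ℝ) :
      hLoss c C t = if 0 ≤ t then 1 / (2 * C) * t ^ 2 else 1 / (2 * c) * t ^ 2 := by
    unfold hLoss; split_ifs <;> ring
  have hLossDeriv_eq : hLossDeriv c C a
      = if 0 ≤ a then 2 * (1 / (2 * C)) * a else 2 * (1 / (2 * c)) * a := by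
    unfold hLossDeriv; split_ifs <;> ring
  rw [hLoss_eq, hLoss_eq, hLossDeriv_eq, ← one_div_mul_eq_div (2 * C) (d ^ 2),
    ← one_div_mul_eq_div (2 * c) (d ^ 2)]
  exact piecewise_sq_bregman_bounds hpq a d

def gradD {m n : ℕ} (c C : ℝ) (x : Fin m → Fin n → ℝ) (y : Fin m → ℝ) (α : Fin m → ℝ) :
    Fin m → ℝ :=
  fun i => ((Qmat x y)ᵀ *ᵥ (Qmat x y *ᵥ α)) i + hLossDeriv c C (α i) - 1

section Expansion

variable {m n : ℕ} {c C : ℝ} (x : Fin m → Fin n → ℝ) (y : Fin m → ℝ)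

lemma Dfun_eq (α : Fin m → ℝ) :
    Dfun c C x y α = (1 / 2) * (Qmat x y *ᵥ α ⬝ᵥ Qmat x y *ᵥ α) + ∑ i, hLoss c C (α i)
      - ∑ i, α i := by
  have hE : (1 / 2) * ∑ i, (Emat c C α *ᵥ α) i * α i = ∑ i, hLoss c C (α i) := by
    rw [Finset.mul_sum]
    refine Finset.sum_congr rfl fun i _ => ?_
    rw [Emat, mulVec_diagonal, hLoss]
    split_ifs <;> ring
  rw [Dfun, hE, dotProduct]
  simp only [sq]

lemma Dfun_add (α d : Fin m → ℝ) :
    Dfun c C x y (α + d) = Dfun c C x y α + gradD c C x y α ⬝ᵥ d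
      + (1 / 2) * (Qmat x y *ᵥ d ⬝ᵥ Qmat x y *ᵥ d)
      + ∑ i, (hLoss c C (α i + d i) - hLoss c C (α i) - hLossDeriv c C (α i) * d i) := by
  have hcross : (Qmat x y)ᵀ *ᵥ (Qmat x y *ᵥ α) ⬝ᵥ d = Qmat x y *ᵥ α ⬝ᵥ Qmat x y *ᵥ d := by
    rw [mulVec_transpose, ← dotProduct_mulVec]
  have hgrad : gradD c C x y α ⬝ᵥ d = (Qmat x y)ᵀ *ᵥ (Qmat x y *ᵥ α) ⬝ᵥ d
      + ∑ i, hLossDeriv c C (α i) * d i - ∑ i, d i := by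
    simp only [gradD, dotProduct, add_mul, sub_mul, one_mul, Finset.sum_add_distrib,
      Finset.sum_sub_distrib]
  rw [Dfun_eq, Dfun_eq, hgrad, hcross, mulVec_add]
  simp only [Pi.add_apply, add_dotProduct, dotProduct_add, Finset.sum_add_distrib,
    Finset.sum_sub_distrib, dotProduct_comm (Qmat x y *ᵥ d) (Qmat x y *ᵥ α)]
  ring

lemma Dfun_add_ge (hc : 0 < c) (hcC : c ≤ C) (α d : Fin m → ℝ) :
    Dfun c C x y α + gradD c C x y α ⬝ᵥ d + (d ⬝ᵥ d) / (2 * C) ≤ Dfun c C x y (α + d) := by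
  have hbreg : (d ⬝ᵥ d) / (2 * C)
      ≤ ∑ i, (hLoss c C (α i + d i) - hLoss c C (α i) - hLossDeriv c C (α i) * d i) := by
    rw [dotProduct, Finset.sum_div]
    exact Finset.sum_le_sum fun i _ => by
      simpa only [sq] using (hLoss_bregman_bounds hc hcC (α i) (d i)).1
  have hQ : 0 ≤ Qmat x y *ᵥ d ⬝ᵥ Qmat x y *ᵥ d := Finset.sum_nonneg fun i _ => mul_self_nonneg _
  rw [Dfun_add]
  linarith

lemma Dfun_add_le (hc : 0 < c) (hcC : c ≤ C) (α d : Fin m → ℝ) :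
    Dfun c C x y (α + d) ≤ Dfun c C x y α + gradD c C x y α ⬝ᵥ d
      + ((1 / 2) * (Qmat x y *ᵥ d ⬝ᵥ Qmat x y *ᵥ d) + (d ⬝ᵥ d) / (2 * c)) := by
  have hbreg : ∑ i, (hLoss c C (α i + d i) - hLoss c C (α i) - hLossDeriv c C (α i) * d i)
      ≤ (d ⬝ᵥ d) / (2 * c) := by
    rw [dotProduct, Finset.sum_div]
    exact Finset.sum_le_sum fun i _ => by
      simpa only [sq] using (hLoss_bregman_bounds hc hcC (α i) (d i)).2
  rw [Dfun_add]
  linarith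

end Expansion

lemma eq_zero_of_isLocalMin_mul_add_sq {G K : ℝ}
    (h : IsLocalMin (fun t : ℝ => t * G + t ^ 2 * K) 0) : G = 0 := by
  have hderiv : HasDerivAt (fun t : ℝ => t * G + t ^ 2 * K) G 0 := by
    simpa using (hasDerivAt_mul_const G).fun_add ((hasDerivAt_pow 2 (0 : ℝ)).mul_const K)
  exact h.hasDerivAt_eq_zero hderiv

lemma isLocalMinOn_of_euclNorm_lt {m : ℕ} {f : (Fin m → ℝ) → ℝ} {S : Set (Fin m → ℝ)}
    {a : Fin m → ℝ} (h : ∃ ε > (0 : ℝ), ∀ α ∈ S, euclNorm (α - a) < ε → f a ≤ f α) :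
    IsLocalMinOn f S a := by
  obtain ⟨ε, hε, h⟩ := h
  have hcont : Continuous fun α : Fin m → ℝ => euclNorm (α - a) := by
    unfold euclNorm; fun_prop
  have hnear : ∀ᶠ α in 𝓝 a, euclNorm (α - a) < ε :=
    hcont.continuousAt.eventually_lt continuousAt_const (by simpa [euclNorm] using hε)
  filter_upwards [self_mem_nhdsWithin, nhdsWithin_le_nhds hnear] with α hαS hα
  exact h α hαS hα

lemma gradD_dotProduct_eq_zero_of_isLocalMinOn {m n : ℕ} {c C : ℝ} (hc : 0 < c) (hcC : c ≤ C)
    (x : Fin m → Fin n → ℝ) (y : Fin m → ℝ) {S : Set (Fin m → ℝ)} {α d : Fin m → ℝ}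
    (hmin : IsLocalMinOn (Dfun c C x y) S α) (hline : ∀ t : ℝ, α + t • d ∈ S) :
    gradD c C x y α ⬝ᵥ d = 0 := by
  have hlineMin : IsLocalMin (fun t : ℝ => Dfun c C x y (α + t • d)) 0 := by
    refine IsMinFilter.comp_tendsto (g := fun t : ℝ => α + t • d) (b := 0)
      (by rw [zero_smul, add_zero]; exact hmin) ?_
    exact tendsto_nhdsWithin_iff.2 ⟨(by fun_prop : Continuous fun t : ℝ => α + t • d).tendsto' 0 α
      (by simp), Eventually.of_forall hline⟩
  set K := (1 / 2) * (Qmat x y *ᵥ d ⬝ᵥ Qmat x y *ᵥ d) + (d ⬝ᵥ d) / (2 * c)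
  refine eq_zero_of_isLocalMin_mul_add_sq (K := K) ?_
  filter_upwards [hlineMin] with t ht
  have hup := Dfun_add_le x y hc hcC α (t • d)
  simp only [zero_smul, add_zero, mulVec_smul, dotProduct_smul, smul_dotProduct,
    smul_eq_mul] at ht hup
  have hK : t * (gradD c C x y α ⬝ᵥ d) + ((1 / 2) * (t * (t * (Qmat x y *ᵥ d ⬝ᵥ Qmat x y *ᵥ d)))
      + t * (t * (d ⬝ᵥ d)) / (2 * c)) = t * (gradD c C x y α ⬝ᵥ d) + t ^ 2 * K := by
    ring
  simp only [zero_mul, ne_eq, OfNat.ofNat_ne_zero, not_false_eq_true, zero_pow, zero_add]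
  linarith

section PairDirection

variable {m : ℕ}

def pairDir (y : Fin m → ℝ) (i j : Fin m) : Fin m → ℝ := Pi.single i (y j) - Pi.single j (y i)

lemma dotProduct_pairDir (g y : Fin m → ℝ) (i j : Fin m) :
    g ⬝ᵥ pairDir y i j = g i * y j - g j * y i := by
  simp [pairDir, dotProduct_sub, dotProduct_single]

lemma pairDir_dotProduct_self (y : Fin m → ℝ) (i j : Fin m) : pairDir y i j ⬝ᵥ y = 0 := by
  rw [dotProduct_comm, dotProduct_pairDir]
  ring

lemma zeroNorm_add_smul_pairDir_le (α y : Fin m → ℝ) (i j : Fin m) (t : ℝ) :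
    zeroNorm (α + t • pairDir y i j) ≤ (insert i (insert j {k | α k ≠ 0})).ncard := by
  refine Set.ncard_le_ncard (fun k hk => ?_) (Set.toFinite _)
  by_contra hk'
  simp only [Set.mem_insert_iff, Set.mem_ofPred_eq, not_or, not_not] at hk'
  obtain ⟨hki, hkj, hk0⟩ := hk'
  simp [pairDir, Pi.single_apply, hki, hkj, hk0] at hk

lemma zeroNorm_add_smul_pairDir_le_succ {α : Fin m → ℝ} {j : Fin m} (hj : α j ≠ 0)
    (y : Fin m → ℝ) (i : Fin m) (t : ℝ) :
    zeroNorm (α + t • pairDir y i j) ≤ zeroNorm α + 1 := by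
  have hmem : j ∈ {k | α k ≠ 0} := hj
  have h := (zeroNorm_add_smul_pairDir_le α y i j t).trans (Set.ncard_insert_le _ _)
  rwa [Set.insert_eq_of_mem hmem] at h

lemma zeroNorm_smul_pairDir_le_two (y : Fin m → ℝ) (i j : Fin m) (t : ℝ) :
    zeroNorm (t • pairDir y i j) ≤ 2 := by
  have h := (zeroNorm_add_smul_pairDir_le 0 y i j t).trans (Set.ncard_insert_le _ _)
  simpa using h

end PairDirection

lemma eq_zero_of_zeroNorm_le_one {m : ℕ} {y β : Fin m → ℝ} (hy : ∀ i, y i ≠ 0)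
    (hβy : ∑ i, β i * y i = 0) (hβ : zeroNorm β ≤ 1) : β = 0 := by
  by_contra hne
  obtain ⟨k, hk⟩ := Function.ne_iff.1 hne
  have hsupp : ∀ j, j ≠ k → β j = 0 := fun j hj => by
    by_contra hβj
    exact hj ((Set.ncard_le_one_iff (Set.toFinite _)).1 hβ hβj hk)
  rw [Finset.sum_eq_single k (fun j _ hj => by rw [hsupp j hj, zero_mul]) (by simp)] at hβy
  exact mul_ne_zero hk (hy k) hβy

lemma exists_pairDir_zeroNorm_le {m : ℕ} {y α β : Fin m → ℝ} {s : ℕ} (hy : ∀ i, y i ≠ 0)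
    (hα : zeroNorm α < s) (hβ : feasible y s β) (hne : β ≠ α) :
    ∃ j, ∀ i (t : ℝ), zeroNorm (α + t • pairDir y i j) ≤ s := by
  by_cases hsupp : ∃ j, α j ≠ 0
  · obtain ⟨j, hj⟩ := hsupp
    exact ⟨j, fun i t => (zeroNorm_add_smul_pairDir_le_succ hj y i t).trans hα⟩
  · obtain rfl : α = 0 := funext fun k => not_not.1 fun h => hsupp ⟨k, h⟩
    obtain ⟨k, -⟩ := Function.ne_iff.1 hne
    have hs : 2 ≤ s := by
      by_contra hs
      exact hne (eq_zero_of_zeroNorm_le_one hy hβ.1 (by linarith [hβ.2]))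
    exact ⟨k, fun i t => by simpa using (zeroNorm_smul_pairDir_le_two y i k t).trans hs⟩

lemma gradD_eq_smul_of_isLocalMinOn {m n : ℕ} {c C : ℝ} (hc : 0 < c) (hcC : c ≤ C)
    (x : Fin m → Fin n → ℝ) {y : Fin m → ℝ} {s : ℕ} {α : Fin m → ℝ} {j : Fin m}
    (hmin : IsLocalMinOn (Dfun c C x y) {β | feasible y s β} α) (hα : ∑ i, α i * y i = 0)
    (hj : ∀ i (t : ℝ), zeroNorm (α + t • pairDir y i j) ≤ s) (hyj : y j ≠ 0) :
    gradD c C x y α = (gradD c C x y α j / y j) • y := by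
  funext i
  have hline : ∀ t : ℝ, α + t • pairDir y i j ∈ {β | feasible y s β} := fun t => by
    refine ⟨?_, hj i t⟩
    have h := pairDir_dotProduct_self y i j
    simp only [dotProduct] at h
    simp only [Pi.add_apply, Pi.smul_apply, smul_eq_mul, add_mul, Finset.sum_add_distrib,
      mul_assoc, ← Finset.mul_sum, hα, h, mul_zero, add_zero]
  have h := gradD_dotProduct_eq_zero_of_isLocalMinOn hc hcC x y hmin hline
  rw [dotProduct_pairDir] at h
  simp only [Pi.smul_apply, smul_eq_mul]
  field_simp
  linarith

lemma Dfun_add_sq_le_of_isLocalMinOn {m n : ℕ} {c C : ℝ} (hc : 0 < c) (hcC : c ≤ C)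
    (x : Fin m → Fin n → ℝ) {y : Fin m → ℝ} (hy : ∀ i, y i ≠ 0) {s : ℕ} {α β : Fin m → ℝ}
    (hmin : IsLocalMinOn (Dfun c C x y) {γ | feasible y s γ} α) (hα : feasible y s α)
    (hαs : zeroNorm α < s) (hβ : feasible y s β) :
    Dfun c C x y α + ((β - α) ⬝ᵥ (β - α)) / (2 * C) ≤ Dfun c C x y β := by
  have horth : gradD c C x y α ⬝ᵥ (β - α) = 0 := by
    rcases eq_or_ne β α with rfl | hne
    · simp
    obtain ⟨j, hj⟩ := exists_pairDir_zeroNorm_le hy hαs hβ hne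
    rw [gradD_eq_smul_of_isLocalMinOn hc hcC x hmin hα.1 hj (hy j), smul_dotProduct,
      dotProduct_comm, sub_dotProduct]
    simp [dotProduct, hβ.1, hα.1]
  simpa [horth] using Dfun_add_ge x y hc hcC α (β - α)

theorem stmt_13_general {m n : ℕ} (c C : ℝ) (hc : 0 < c) (hcC : c < C)
    (x : Fin m → Fin n → ℝ) (y : Fin m → ℝ) (hy : ∀ i, y i = 1 ∨ y i = -1)
    (s : ℕ) (αstar : Fin m → ℝ) (hfeas : feasible y s αstar)
    (hloc : ∃ ε > (0 : ℝ), ∀ α : Fin m → ℝ, feasible y s α → euclNorm (α - αstar) < ε →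
      Dfun c C x y αstar ≤ Dfun c C x y α)
    (hz : zeroNorm αstar < s) :
    (∀ α : Fin m → ℝ, feasible y s α → Dfun c C x y αstar ≤ Dfun c C x y α) ∧
      (∀ α : Fin m → ℝ, feasible y s α → Dfun c C x y α = Dfun c C x y αstar → α = αstar) := by
  have hy0 : ∀ i, y i ≠ 0 := fun i => by rcases hy i with h | h <;> simp [h]
  have hgrowth (α : Fin m → ℝ) (hα : feasible y s α) :=
    Dfun_add_sq_le_of_isLocalMinOn hc hcC.le x hy0 (isLocalMinOn_of_euclNorm_lt hloc) hfeas hz hα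
  have hsq (α : Fin m → ℝ) : 0 ≤ (α - αstar) ⬝ᵥ (α - αstar) / (2 * C) :=
    div_nonneg (Finset.sum_nonneg fun i _ => mul_self_nonneg _) (by linarith)
  refine ⟨fun α hα => by linarith [hgrowth α hα, hsq α], fun α hα heq => ?_⟩
  have hzero : (α - αstar) ⬝ᵥ (α - αstar) / (2 * C) = 0 := by
    linarith [hgrowth α hα, hsq α]
  rw [div_eq_zero_iff, dotProduct_self_eq_zero, sub_eq_zero] at hzero
  exact hzero.resolve_right (by linarith)

/-- a local minimizer with ‖α*‖₀ < s is the unique global minimizer. -/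
theorem stmt_13 {m n : ℕ} (hm : 1 ≤ m) (hn : 1 ≤ n) (c C : ℝ) (hc : 0 < c) (hcC : c < C)
    (x : Fin m → Fin n → ℝ) (y : Fin m → ℝ) (hy : ∀ i, y i = 1 ∨ y i = -1)
    (s : ℕ) (hs1 : 1 ≤ s) (hs2 : s ≤ m)
    (αstar : Fin m → ℝ) (hfeas : feasible y s αstar)
    (hloc : ∃ ε > (0 : ℝ), ∀ α : Fin m → ℝ, feasible y s α → euclNorm (α - αstar) < ε →
      Dfun c C x y αstar ≤ Dfun c C x y α)
    (hz : zeroNorm αstar < s) :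
    (∀ α : Fin m → ℝ, feasible y s α → Dfun c C x y αstar ≤ Dfun c C x y α) ∧
      (∀ α : Fin m → ℝ, feasible y s α → Dfun c C x y α = Dfun c C x y αstar → α = αstar) :=
  stmt_13_general c C hc hcC x y hy s αstar hfeas hloc hz
end
end

section
/- (Lemma 2 a, case ‖α*‖₀ = s.) Let (α*, b*) be an η-stationary point of (SSVM) with ‖α*‖₀ = s and η·max_i |g_i(α*, b*)| < ‖α*‖_[s]. Then T_s(α* − η·g(α*, b*)) = {S*}, where S* = supp(α*), and there exists δ* > 0 such that for every (α, b) ∈ ℝ^m × ℝ with ‖(α,b) − (α*,b*)‖ < δ* and ‖α‖₀ ≤ s, one has T_s(α − η·g(α, b)) = {S*}. -/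
/-!
At an η-stationary point with `‖α*‖₀ = s`, the projection `α*` of `β* := α* − η g(α*, b*)` agrees
with `β*` on `S* = supp α*`, while off `S*` one has `|β*_j| = η |g_j| < ‖α*‖_[s] ≤ |α*_i| = |β*_i|`.
So the `s` entries of `β*` indexed by `S*` are strictly larger in magnitude than all others, and
`T_s(β*) = {S*}`. The map `(α, b) ↦ α − η g(α, b)` is continuous (`E(α) α` is the continuous
piecewise linear map `t ↦ t⁺ / C + t⁻ / c` in each coordinate), so these finitely many strict
inequalities persist near `(α*, b*)`.
-/

noncomputable section

open Finset Matrix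

open Filter Topology

theorem Tsets_eq_singleton_of_forall_abs_lt {m s : ℕ} {β : Fin m → ℝ} {S : Finset (Fin m)}
    (hcard : S.card = s) (hgap : ∀ i ∈ S, ∀ j ∉ S, |β j| < |β i|) : Tsets s β = {S} := by
  ext T
  simp only [Tsets, Set.mem_ofPred_eq, Set.mem_singleton_iff]
  constructor
  · rintro ⟨hTcard, hT⟩
    have hST : S ⊆ T := by
      intro i hiS
      by_contra hiT
      have hTS : ¬T ⊆ S := fun hTS =>
        hiT (Finset.eq_of_subset_of_card_le hTS (by omega) ▸ hiS)
      obtain ⟨j, hjT, hjS⟩ := Finset.not_subset.1 hTS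
      exact (hgap i hiS j hjS).not_ge (hT j hjT i hiT)
    exact (Finset.eq_of_subset_of_card_le hST (by omega)).symm
  · rintro rfl
    exact ⟨hcard, fun i hi j hj => (hgap i hi j hj).le⟩

theorem sthLargest_le_abs {m s : ℕ} {α : Fin m → ℝ} (hz : zeroNorm α = s) {i : Fin m}
    (hi : α i ≠ 0) : sthLargest s α ≤ |α i| := by
  refine Real.sSup_le (fun t ht => ?_) (abs_nonneg _)
  by_contra! hlt
  have hsub : {j | t ≤ |α j|} ⊆ {j | α j ≠ 0} \ {i} := by
    intro j hj
    simp only [Set.mem_ofPred_eq] at hj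
    refine ⟨fun h0 => ?_, fun hji => ?_⟩
    · rw [h0, abs_zero] at hj
      linarith [abs_nonneg (α i)]
    · rw [Set.mem_singleton_iff.1 hji] at hj
      linarith
  have hlt := (Set.ncard_le_ncard hsub).trans_lt
    (Set.ncard_sdiff_singleton_lt_of_mem (s := {j | α j ≠ 0}) hi)
  rw [Set.mem_ofPred_eq] at ht
  unfold zeroNorm at hz
  omega

theorem eq_of_mem_hardThr_of_ne_zero {m s : ℕ} {u β : Fin m → ℝ} (hu : u ∈ hardThr s β)
    {i : Fin m} (hi : u i ≠ 0) : u i = β i := by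
  -- overwriting `u i` by `β i` keeps the sparsity and can only decrease the distance to `β`
  set v := Function.update u i (β i)
  have hv : zeroNorm v ≤ s := by
    refine le_trans (Set.ncard_le_ncard fun j (hj : v j ≠ 0) => ?_) hu.1
    by_cases hji : j = i
    · exact hji ▸ hi
    · simpa [v, hji] using hj
  have hle : ∀ j ∈ univ, (v j - β j) ^ 2 ≤ (u j - β j) ^ 2 := by
    intro j _
    by_cases hji : j = i
    · simp [v, hji, sq_nonneg]
    · simp [v, hji]
  have hsum : ∑ j, (v j - β j) ^ 2 = ∑ j, (u j - β j) ^ 2 := by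
    refine le_antisymm (Finset.sum_le_sum hle) ?_
    have hmin := hu.2 v hv
    simp only [euclNorm, Pi.sub_apply] at hmin
    exact (Real.sqrt_le_sqrt_iff (by positivity)).1 hmin
  have hi_eq := (Finset.sum_eq_sum_iff_of_le hle).1 hsum i (mem_univ i)
  simp only [v, Function.update_self, sub_self] at hi_eq
  nlinarith

theorem abs_lt_abs_of_etaStat {m n : ℕ} {c C : ℝ} {x : Fin m → Fin n → ℝ} {y : Fin m → ℝ}
    {s : ℕ} {η : ℝ} (hη : 0 < η) {α : Fin m → ℝ} {b : ℝ} (hst : etaStat c C x y s η α b)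
    (hz : zeroNorm α = s) (hgap : η * (⨆ i, |gfun c C x y α b i|) < sthLargest s α)
    {i j : Fin m} (hi : α i ≠ 0) (hj : α j = 0) :
    |(α - η • gfun c C x y α b) j| < |(α - η • gfun c C x y α b) i| := by
  set g := gfun c C x y α b
  calc |(α - η • g) j| = η * |g j| := by simp [hj, abs_mul, abs_of_pos hη]
    _ ≤ η * ⨆ k, |g k| := mul_le_mul_of_nonneg_left
      (le_ciSup (f := fun k => |g k|) (Finite.bddAbove_range _) j) hη.le
    _ < sthLargest s α := hgap
    _ ≤ |α i| := sthLargest_le_abs hz hi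
    _ = |(α - η • g) i| := by rw [← eq_of_mem_hardThr_of_ne_zero hst.1 hi]

theorem continuous_gfun {m n : ℕ} (c C : ℝ) (x : Fin m → Fin n → ℝ) (y : Fin m → ℝ) :
    Continuous fun p : (Fin m → ℝ) × ℝ => gfun c C x y p.1 p.2 := by
  have hE (t : ℝ) : (if 0 ≤ t then 1 / C else 1 / c) * t = max t 0 / C + min t 0 / c := by
    split_ifs with ht
    · simp [max_eq_left ht, min_eq_right ht, div_eq_inv_mul]
    · simp [max_eq_right (not_le.1 ht).le, min_eq_left (not_le.1 ht).le, div_eq_inv_mul]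
  have hg : (fun p : (Fin m → ℝ) × ℝ => gfun c C x y p.1 p.2) = fun p =>
      ((Qmat x y)ᵀ * Qmat x y) *ᵥ p.1 + (fun i => max (p.1 i) 0 / C + min (p.1 i) 0 / c)
        - (fun _ => 1) + p.2 • y := by
    funext p i
    simp only [gfun, Hmat, add_mulVec, Emat, Pi.add_apply, Pi.sub_apply, mulVec_diagonal, hE]
  rw [hg]
  fun_prop

theorem eventually_forall_abs_lt {X : Type*} [TopologicalSpace X] {m : ℕ} {β : X → Fin m → ℝ}
    {x₀ : X} (hβ : ContinuousAt β x₀) {S : Finset (Fin m)}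
    (hgap : ∀ i ∈ S, ∀ j ∉ S, |β x₀ j| < |β x₀ i|) :
    ∀ᶠ x in 𝓝 x₀, ∀ i ∈ S, ∀ j ∉ S, |β x j| < |β x i| := by
  have hcoord (k : Fin m) : Tendsto (fun x => |β x k|) (𝓝 x₀) (𝓝 |β x₀ k|) :=
    ((continuous_apply k).continuousAt.comp hβ).abs
  exact (eventually_all_finset S).2 fun i hi => eventually_all.2 fun j =>
    eventually_imp_distrib_left.2 fun hj => (hcoord j).eventually_lt (hcoord i) (hgap i hi j hj)

theorem dist_le_pairDist {m : ℕ} (α α' : Fin m → ℝ) (b b' : ℝ) :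
    dist (α, b) (α', b') ≤ pairDist α b α' b' := by
  have hα (i : Fin m) : (α i - α' i) ^ 2 ≤ (∑ j, (α j - α' j) ^ 2) + (b - b') ^ 2 := by
    have := single_le_sum (fun j _ => sq_nonneg (α j - α' j)) (mem_univ i)
    nlinarith [sq_nonneg (b - b')]
  have hb : (b - b') ^ 2 ≤ (∑ j, (α j - α' j) ^ 2) + (b - b') ^ 2 :=
    le_add_of_nonneg_left (sum_nonneg fun j _ => sq_nonneg _)
  rw [Prod.dist_eq]
  refine max_le ((dist_pi_le_iff (Real.sqrt_nonneg _)).2 fun i => ?_) ?_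
  · rw [Real.dist_eq, ← Real.sqrt_sq_eq_abs]
    exact Real.sqrt_le_sqrt (hα i)
  · rw [Real.dist_eq, ← Real.sqrt_sq_eq_abs]
    exact Real.sqrt_le_sqrt hb

theorem stmt_17_general {m n : ℕ} (c C : ℝ)
    (x : Fin m → Fin n → ℝ) (y : Fin m → ℝ)
    (s : ℕ) (η : ℝ) (hη : 0 < η)
    (αstar : Fin m → ℝ) (bstar : ℝ)
    (hst : etaStat c C x y s η αstar bstar) (hz : zeroNorm αstar = s)
    (hgap : η * (⨆ i, |gfun c C x y αstar bstar i|) < sthLargest s αstar) :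
    Tsets s (αstar - η • gfun c C x y αstar bstar)
        = {(Set.toFinite {i | αstar i ≠ 0}).toFinset} ∧
      ∃ δ > (0 : ℝ), ∀ (α : Fin m → ℝ) (b : ℝ), pairDist α b αstar bstar < δ →
        zeroNorm α ≤ s →
        Tsets s (α - η • gfun c C x y α b) = {(Set.toFinite {i | αstar i ≠ 0}).toFinset} := by
  set S := (Set.toFinite {i | αstar i ≠ 0}).toFinset
  have hcard : S.card = s := by rw [← hz, zeroNorm, Set.ncard_eq_toFinset_card]
  have hSgap : ∀ i ∈ S, ∀ j ∉ S, |(αstar - η • gfun c C x y αstar bstar) j|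
      < |(αstar - η • gfun c C x y αstar bstar) i| := fun i hi j hj =>
    abs_lt_abs_of_etaStat hη hst hz hgap (by simpa [S] using hi) (by simpa [S] using hj)
  have hcont : Continuous fun p : (Fin m → ℝ) × ℝ => p.1 - η • gfun c C x y p.1 p.2 := by
    have := continuous_gfun c C x y
    fun_prop
  obtain ⟨δ, hδ, hball⟩ := Metric.eventually_nhds_iff.1
    (eventually_forall_abs_lt hcont.continuousAt (x₀ := (αstar, bstar)) hSgap)
  refine ⟨Tsets_eq_singleton_of_forall_abs_lt hcard hSgap, δ, hδ, fun α b hd _ => ?_⟩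
  exact Tsets_eq_singleton_of_forall_abs_lt hcard
    (hball ((dist_le_pairDist α αstar b bstar).trans_lt hd))

/-- Lemma 2 a, case ‖α*‖₀ = s: T_s is locally constant, equal to {supp(α*)}. -/
theorem stmt_17 {m n : ℕ} (hm : 1 ≤ m) (hn : 1 ≤ n) (c C : ℝ) (hc : 0 < c) (hcC : c < C)
    (x : Fin m → Fin n → ℝ) (y : Fin m → ℝ) (hy : ∀ i, y i = 1 ∨ y i = -1)
    (s : ℕ) (hs1 : 1 ≤ s) (hs2 : s ≤ m) (η : ℝ) (hη : 0 < η)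
    (αstar : Fin m → ℝ) (bstar : ℝ)
    (hst : etaStat c C x y s η αstar bstar) (hz : zeroNorm αstar = s)
    (hgap : η * (⨆ i, |gfun c C x y αstar bstar i|) < sthLargest s αstar) :
    Tsets s (αstar - η • gfun c C x y αstar bstar)
        = {(Set.toFinite {i | αstar i ≠ 0}).toFinset} ∧
      ∃ δ > (0 : ℝ), ∀ (α : Fin m → ℝ) (b : ℝ), pairDist α b αstar bstar < δ →
        zeroNorm α ≤ s →
        Tsets s (α - η • gfun c C x y α b) = {(Set.toFinite {i | αstar i ≠ 0}).toFinset} :=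
  stmt_17_general c C x y s η hη αstar bstar hst hz hgap
end
end
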